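/- For every l ∈ {1, …, m}, E[Z_l · 1_{S ≤ c} + c · (Z_l / S) · 1_{S > c}] = (λ_l / Λ) · (c − Σ_{h=0}^{c} (c−h) · Λ^h e^{−Λ} / h!). -/

import Mathlib

/-!
Write `S = Z_l + R` with `R` the sum of the other coordinates, so that `Z_l` and `R` are
independent Poisson variables and `S ~ Po(Λ)`. The integrand is `Z_l * φ(S)` where
`φ(s) = min(1, c/s)`. The Poisson identity `E[X f(X)] = λ E[f(X + 1)]`, applied under the
product law of `(Z_l, R)` and once more to `S`, gives `E[Z_l φ(S)] = (λ_l / Λ) E[S φ(S)]`,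
and `S φ(S) = min S c = c - (c - S)⁺`, whose expectation is a finite sum.
-/

open MeasureTheory ProbabilityTheory Real
open scoped NNReal Nat

namespace ProbabilityTheory

theorem poissonMeasure_zero : Po(0) = Measure.dirac 0 := by
  ext s hs
  rw [poissonMeasure, Measure.sum_apply _ hs, tsum_eq_single 0 fun n hn ↦ by simp [hn]]
  simp

/-- No integrability is needed: after reindexing, both sides are the same `tsum`. -/
theorem integral_natCast_mul_poissonMeasure (r : ℝ≥0) (f : ℕ → ℝ) :
    ∫ n, (n : ℝ) * f n ∂Po(r) = r * ∫ n, f (n + 1) ∂Po(r) := by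
  rw [integral_poissonMeasure, integral_poissonMeasure, ← tsum_mul_left,
    ← tsum_pnat_eq_tsum_of_eq_zero (by simp),
    tsum_pnat_eq_tsum_succ (f := fun n ↦ (rexp (-r) * r ^ n / n !) • ((n : ℝ) * f n))]
  congr 1 with n
  simp only [smul_eq_mul, Nat.cast_add, Nat.cast_one, Nat.factorial_succ, Nat.cast_mul, pow_succ]
  field_simp

theorem integral_min_poissonMeasure (r : ℝ≥0) (c : ℕ) :
    ∫ n, ((min n c : ℕ) : ℝ) ∂Po(r) =
      c - ∑ h ∈ Finset.range (c + 1), ((c : ℝ) - h) * r ^ h * rexp (-r) / h ! := by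
  have hmin : ∀ n, ((min n c : ℕ) : ℝ) = c - ((c - n : ℕ) : ℝ) := fun n ↦ by
    rw [eq_sub_iff_add_eq]; norm_cast; omega
  have hdeficit : ∫ n, ((c - n : ℕ) : ℝ) ∂Po(r) =
      ∑ h ∈ Finset.range (c + 1), ((c : ℝ) - h) * r ^ h * rexp (-r) / h ! := by
    rw [integral_poissonMeasure, tsum_eq_sum (s := Finset.range (c + 1)) fun n hn ↦ by
      simp [Nat.sub_eq_zero_of_le (by simpa using hn : c < n).le]]
    refine Finset.sum_congr rfl fun h hh ↦ ?_
    rw [Nat.cast_sub (by simpa [Nat.lt_succ_iff] using hh), smul_eq_mul]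
    ring
  have hint : Integrable (fun n ↦ ((c - n : ℕ) : ℝ)) Po(r) :=
    .of_bound .of_discrete c (ae_of_all _ fun n ↦ by simp)
  simp_rw [hmin]
  rw [integral_sub (integrable_const _) hint, hdeficit]
  simp

theorem iIndepFun.hasLaw_sum_poissonMeasure {Ω ι : Type*} {mΩ : MeasurableSpace Ω}
    {P : Measure Ω} [IsProbabilityMeasure P] {X : ι → Ω → ℕ} {r : ι → ℝ≥0}
    (hX : iIndepFun X P) (hlaw : ∀ i, HasLaw (X i) Po(r i) P) (s : Finset ι) :
    HasLaw (∑ i ∈ s, X i) Po(∑ i ∈ s, r i) P := by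
  classical
  induction s using Finset.induction with
  | empty => simpa [poissonMeasure_zero] using hasLaw_dirac_of_ae_eq (X := (0 : Ω → ℕ)) (by rfl)
  | insert i s hi ih =>
    rw [Finset.sum_insert hi, Finset.sum_insert hi]
    exact (hX.indepFun_finsetSum_of_notMem₀ (fun j ↦ (hlaw j).aemeasurable) hi).symm
      |>.hasLaw_add_poissonMeasure (hlaw i) ih

/-- The integral form of `E[X | X + Y] = a / (a + b) * (X + Y)`. -/
theorem IndepFun.integral_mul_comp_add_poissonMeasure {Ω : Type*} {mΩ : MeasurableSpace Ω}
    {P : Measure Ω} [IsFiniteMeasure P] {X Y : Ω → ℕ} {a b : ℝ≥0} (hXY : IndepFun X Y P)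
    (hX : HasLaw X Po(a) P) (hY : HasLaw Y Po(b) P) {g : ℕ → ℝ} {C : ℝ}
    (hg : ∀ n : ℕ, |(n : ℝ) * g n| ≤ C) :
    ∫ ω, (X ω : ℝ) * g (X ω + Y ω) ∂P = a / (a + b) * ∫ n, (n : ℝ) * g n ∂Po(a + b) := by
  have hbound : ∀ x y : ℕ, |(x : ℝ) * g (x + y)| ≤ C := fun x y ↦ calc
    |(x : ℝ) * g (x + y)| = x * |g (x + y)| := by rw [abs_mul, Nat.abs_cast]
    _ ≤ (x + y : ℕ) * |g (x + y)| := by gcongr; omega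
    _ = |((x + y : ℕ) : ℝ) * g (x + y)| := by rw [abs_mul, Nat.abs_cast]
    _ ≤ C := hg _
  have hYX : HasLaw (fun ω ↦ (Y ω, X ω)) (Po(b).prod Po(a)) P := hXY.symm.hasLaw_prod hY hX
  have hshift : ∫ ω, (X ω : ℝ) * g (X ω + Y ω) ∂P = a * ∫ n, g (n + 1) ∂Po(a + b) := calc
    _ = ∫ p, (p.2 : ℝ) * g (p.2 + p.1) ∂(Po(b).prod Po(a)) := hYX.integral_comp .of_discrete
    _ = ∫ y, ∫ x, (x : ℝ) * g (x + y) ∂Po(a) ∂Po(b) :=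
        integral_prod _ (.of_bound .of_discrete C (ae_of_all _ fun p ↦ hbound p.2 p.1))
    _ = a * ∫ y, ∫ x, g (y + x + 1) ∂Po(a) ∂Po(b) := by
        simp_rw [integral_natCast_mul_poissonMeasure, integral_const_mul, add_right_comm,
          add_comm]
    _ = a * ∫ n, g (n + 1) ∂Po(a + b) := by
        rw [add_comm a b, ← poissonMeasure_conv_poissonMeasure, integral_conv]
        refine .of_bound .of_discrete C (ae_of_all _ fun n ↦ ?_)
        simpa [add_comm 1 n] using hbound 1 n
  rw [hshift, integral_natCast_mul_poissonMeasure]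
  rcases eq_or_ne (a + b) 0 with hab | hab
  · simp [(add_eq_zero.mp hab).1]
  · have hab' : (a + b : ℝ) ≠ 0 := by exact_mod_cast hab
    rw [NNReal.coe_add]
    field_simp

end ProbabilityTheory

noncomputable def servedFraction (c s : ℕ) : ℝ := if s ≤ c then 1 else c / s

theorem mul_servedFraction (c z s : ℕ) :
    (z : ℝ) * servedFraction c s =
      z * (if s ≤ c then 1 else 0) + c * (z / s) * (if c < s then 1 else 0) := by
  unfold servedFraction
  split_ifs <;> first | omega | ring

theorem natCast_mul_servedFraction_self (c s : ℕ) :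
    (s : ℝ) * servedFraction c s = (min s c : ℕ) := by
  unfold servedFraction
  split_ifs with h
  · simp [h]
  · have hs : (s : ℝ) ≠ 0 := by exact_mod_cast (by omega : s ≠ 0)
    rw [min_eq_right (by omega)]
    field_simp

theorem abs_natCast_mul_servedFraction_le (c s : ℕ) : |(s : ℝ) * servedFraction c s| ≤ c := by
  rw [natCast_mul_servedFraction_self, Nat.abs_cast]
  exact_mod_cast min_le_right s c

theorem expectation_poisson_coupons_general {Ω : Type*} [MeasurableSpace Ω]
    (μ : Measure Ω) [IsProbabilityMeasure μ]
    (m c : ℕ)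
    (lam : Fin m → NNReal)
    (Z : Fin m → Ω → ℕ)
    (hindep : iIndepFun Z μ)
    (hZ : ∀ j, Measure.map (Z j) μ = poissonMeasure (lam j))
    (l : Fin m) :
    ∫ ω, ((Z l ω : ℝ) * (if (∑ j, Z j ω) ≤ c then (1 : ℝ) else 0)
        + (c : ℝ) * ((Z l ω : ℝ) / ((∑ j, Z j ω : ℕ) : ℝ)) *
            (if c < ∑ j, Z j ω then (1 : ℝ) else 0)) ∂μ =
      ((lam l : ℝ) / (∑ j, (lam j : ℝ))) *
        ((c : ℝ) - ∑ h ∈ Finset.range (c + 1),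
          ((c : ℝ) - (h : ℝ)) * (∑ j, (lam j : ℝ)) ^ h *
            Real.exp (-(∑ j, (lam j : ℝ))) / (Nat.factorial h)) := by
  have hlaw : ∀ j, HasLaw (Z j) Po(lam j) μ := fun j ↦
    ⟨.of_map_ne_zero (hZ j ▸ IsProbabilityMeasure.ne_zero _), hZ j⟩
  set R := ∑ j ∈ Finset.univ.erase l, Z j
  have hR : HasLaw R Po(∑ j ∈ Finset.univ.erase l, lam j) μ :=
    hindep.hasLaw_sum_poissonMeasure hlaw _
  have hZR : IndepFun (Z l) R μ := (hindep.indepFun_finsetSum_of_notMem₀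
    (fun j ↦ (hlaw j).aemeasurable) (Finset.notMem_erase l _)).symm
  have hS : ∀ ω, ∑ j, Z j ω = Z l ω + R ω := fun ω ↦ by
    simp only [R, Finset.sum_apply]
    exact (Finset.add_sum_erase _ _ (Finset.mem_univ l)).symm
  have hΛ : lam l + ∑ j ∈ Finset.univ.erase l, lam j = ∑ j, lam j :=
    Finset.add_sum_erase _ _ (Finset.mem_univ l)
  calc _ = ∫ ω, (Z l ω : ℝ) * servedFraction c (Z l ω + R ω) ∂μ := by
        simp_rw [mul_servedFraction, hS]
    _ = lam l / (∑ j, lam j : ℝ≥0) * ∫ n, (n : ℝ) * servedFraction c n ∂Po(∑ j, lam j) := by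
        rw [hZR.integral_mul_comp_add_poissonMeasure (hlaw l) hR
          (abs_natCast_mul_servedFraction_le c), ← NNReal.coe_add, hΛ]
    _ = _ := by
        simp_rw [natCast_mul_servedFraction_self, integral_min_poissonMeasure, NNReal.coe_sum]

/-- Let `Z_1, …, Z_m` be independent Poisson random variables with parameters
`λ_1, …, λ_m > 0`, `Λ = λ_1 + … + λ_m` and `S = Z_1 + … + Z_m`. For every `l`,
`E[Z_l · 1_{S ≤ c} + c · (Z_l / S) · 1_{S > c}]
  = (λ_l / Λ) · (c − Σ_{h=0}^{c} (c−h) · Λ^h e^{−Λ} / h!)`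
(with the convention `Z_l/S := 0` when `S = 0`). -/
theorem expectation_poisson_coupons {Ω : Type*} [MeasurableSpace Ω]
    (μ : Measure Ω) [IsProbabilityMeasure μ]
    (m c : ℕ) (hm : 1 ≤ m) (hc : 1 ≤ c)
    (lam : Fin m → NNReal) (hlam : ∀ j, 0 < lam j)
    (Z : Fin m → Ω → ℕ)
    (hindep : iIndepFun Z μ)
    (hZ : ∀ j, Measure.map (Z j) μ = poissonMeasure (lam j))
    (l : Fin m) :
    ∫ ω, ((Z l ω : ℝ) * (if (∑ j, Z j ω) ≤ c then (1 : ℝ) else 0)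
        + (c : ℝ) * ((Z l ω : ℝ) / ((∑ j, Z j ω : ℕ) : ℝ)) *
            (if c < ∑ j, Z j ω then (1 : ℝ) else 0)) ∂μ =
      ((lam l : ℝ) / (∑ j, (lam j : ℝ))) *
        ((c : ℝ) - ∑ h ∈ Finset.range (c + 1),
          ((c : ℝ) - (h : ℝ)) * (∑ j, (lam j : ℝ)) ^ h *
            Real.exp (-(∑ j, (lam j : ℝ))) / (Nat.factorial h)) :=
  expectation_poisson_coupons_general μ m c lam Z hindep hZ l
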